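/- Let (G,M,I) be a finite context with ∅'' = ∅, let z ∈ G and H = G ∖ {z}, let π□ be the finest extent partition of (G,M,I), let z^□□ be the class of π□ containing z, and assume z^□□ ≠ {z}. Let T be a classification tree in the box extent lattice B(H, M, I ∩ (H×M)) of the subcontext that contains every minimal nonempty box extent of the subcontext (every atom of B(H, M, I ∩ (H×M))), and set T* = {E ∈ T : E is a box extent of (G,M,I)} ∪ {E ∪ {z} : E ∈ T, E ∪ {z} is a box extent of (G,M,I)}. Then T* ∪ {z^□□} is a classification tree in the box extent lattice B(G,M,I) that contains every minimal nonempty box extent of (G,M,I). -/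

import Mathlib

open Set

variable {G M : Type*}

/-- The attribute-derivation `A'` of a set of objects (the restricted relation of a
subcontext agrees with `I` on its object set, so no restriction is needed here). -/
def polarUp (I : G → M → Prop) (A : Set G) : Set M := {m | ∀ g ∈ A, I g m}

/-- The object-derivation `B'` of a set of attributes, computed in the subcontext whose
object set is `H` (relation `I ∩ H×M`). -/
def polarDown (I : G → M → Prop) (H : Set G) (B : Set M) : Set G :=
  {g | g ∈ H ∧ ∀ m ∈ B, I g m}

/-- The closure `A''` computed in the subcontext with object set `H`.
Taking `H = Set.univ` gives the closure in the full context `(G,M,I)`. -/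
def cl2 (I : G → M → Prop) (H A : Set G) : Set G := polarDown I H (polarUp I A)

/-- `A` is an extent of the subcontext with object set `H`. -/
def IsExtent (I : G → M → Prop) (H A : Set G) : Prop := A ⊆ H ∧ cl2 I H A = A

/-- An extent partition of the subcontext with object set `H`: a partition of `H`
all of whose classes are extents. -/
def IsExtentPartition (I : G → M → Prop) (H : Set G) (π : Set (Set G)) : Prop :=
  (∀ A ∈ π, A.Nonempty) ∧ π.Pairwise Disjoint ∧ ⋃₀ π = H ∧ ∀ A ∈ π, IsExtent I H A

/-- `E` is a box extent of the subcontext with object set `H`: a class of some extent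
partition, or `∅''`. -/
def IsBoxExtent (I : G → M → Prop) (H E : Set G) : Prop :=
  (∃ π : Set (Set G), IsExtentPartition I H π ∧ E ∈ π) ∨ E = cl2 I H ∅

/-- The finest extent partition: every class of every extent partition is a union of
its classes. -/
def IsFinestExtentPartition (I : G → M → Prop) (H : Set G) (π : Set (Set G)) : Prop :=
  IsExtentPartition I H π ∧
    ∀ σ : Set (Set G), IsExtentPartition I H σ → ∀ A ∈ σ, ∃ S ⊆ π, A = ⋃₀ S

/-- A classification tree in the box extent lattice of the subcontext with object set
`H`: a set of nonempty box extents such that for every nonempty box extent `X`,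
`{E ∈ T | X ⊆ E}` is a nonempty chain under inclusion. -/
def IsBoxClassTree (I : G → M → Prop) (H : Set G) (T : Set (Set G)) : Prop :=
  (∀ E ∈ T, E.Nonempty ∧ IsBoxExtent I H E) ∧
  ∀ X : Set G, X.Nonempty → IsBoxExtent I H X →
    ({E ∈ T | X ⊆ E}.Nonempty ∧ IsChain (· ⊆ ·) {E ∈ T | X ⊆ E})

/-- A maximal classification tree in the box extent lattice. -/
def IsMaxBoxClassTree (I : G → M → Prop) (H : Set G) (T : Set (Set G)) : Prop :=
  IsBoxClassTree I H T ∧ ∀ T' : Set (Set G), IsBoxClassTree I H T' → T ⊆ T' → T' = T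

/-- Given a classification tree `T` of the subcontext `(G ∖ {z}, M, I ∩ (G∖{z})×M)`,
`treeStar I z T = T⁽¹⁾ ∪ {E ∪ {z} | E ∈ T⁽²⁾}`, where `T⁽¹⁾` consists of the members of
`T` that are box extents of `(G,M,I)` and `T⁽²⁾` of those `E ∈ T` with `E ∪ {z}` a box
extent of `(G,M,I)`. -/
def treeStar (I : G → M → Prop) (z : G) (T : Set (Set G)) : Set (Set G) :=
  {E ∈ T | IsBoxExtent I Set.univ E} ∪
    (fun E => E ∪ {z}) '' {E ∈ T | IsBoxExtent I Set.univ (E ∪ {z})}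

/-!
Every nonempty box extent of `(G,M,I)` is a union of classes of `π□`. As `z^□□ ∖ {z} ≠ ∅`, such
an extent contains `z` iff its trace on `H = G ∖ {z}` meets `z^□□`, so two of them compare as
their traces on `H` do. Traces of members of `T*` lie in `T`, and the trace of a nonempty box
extent `X` is a nonempty box extent of the subcontext, so the chain condition at `X` is inherited
from `T`; `z^□□` lies inside every box extent meeting it. An atom of `B(G,M,I)` is a class of
`π□`; if it is not `z^□□` it avoids `z`, and it is an atom of the subcontext because a box
extent of the subcontext inside it, cut with the classes of `π□` other than `z^□□`, becomes a
class of an extent partition of `(G,M,I)` together with `z^□□`.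
-/

section

variable {I : G → M → Prop} {H A B C E F X Z : Set G} {π σ τ T : Set (Set G)}

lemma polarUp_anti (h : A ⊆ B) : polarUp I B ⊆ polarUp I A :=
  fun _ hm g hg => hm g (h hg)

lemma cl2_mono (h : A ⊆ B) : cl2 I H A ⊆ cl2 I H B :=
  fun _ hg => ⟨hg.1, fun m hm => hg.2 m (polarUp_anti h hm)⟩

lemma subset_cl2 (hA : A ⊆ H) : A ⊆ cl2 I H A :=
  fun g hg => ⟨hA hg, fun _ hm => hm g hg⟩

lemma cl2_subset : cl2 I H A ⊆ H :=
  fun _ hg => hg.1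

lemma cl2_eq_inter : cl2 I H A = cl2 I univ A ∩ H := by
  ext
  simp [cl2, polarDown, and_comm]

lemma isExtent_of_cl2_subset (hA : A ⊆ H) (h : cl2 I H A ⊆ A) : IsExtent I H A :=
  ⟨hA, h.antisymm (subset_cl2 hA)⟩

lemma isExtent_self : IsExtent I H H :=
  isExtent_of_cl2_subset subset_rfl cl2_subset

lemma IsExtent.inter_of_subset (hF : IsExtent I H F) (hC : IsExtent I univ C) (hCH : C ⊆ H) :
    IsExtent I univ (F ∩ C) := by
  have hsubC : cl2 I univ (F ∩ C) ⊆ C := (cl2_mono inter_subset_right).trans hC.2.subset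
  refine isExtent_of_cl2_subset (subset_univ _) (subset_inter (fun g hg => ?_) hsubC)
  rw [← hF.2, cl2_eq_inter]
  exact ⟨cl2_mono inter_subset_left hg, hCH (hsubC hg)⟩

lemma IsExtentPartition.restrict (hσ : IsExtentPartition I univ σ) (H : Set G) :
    IsExtentPartition I H {B | B.Nonempty ∧ ∃ C ∈ σ, B = C ∩ H} := by
  obtain ⟨-, hdisj, hcov, hext⟩ := hσ
  refine ⟨fun _ hB => hB.1, ?_, ?_, ?_⟩
  · rintro _ ⟨-, C₁, hC₁, rfl⟩ _ ⟨-, C₂, hC₂, rfl⟩ hne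
    exact (hdisj hC₁ hC₂ fun h => hne (h ▸ rfl)).mono inter_subset_left inter_subset_left
  · refine (sUnion_subset ?_).antisymm fun g hg => ?_
    · rintro _ ⟨-, C, -, rfl⟩
      exact inter_subset_right
    · obtain ⟨C, hC, hgC⟩ : g ∈ ⋃₀ σ := hcov ▸ mem_univ g
      exact ⟨C ∩ H, ⟨⟨g, hgC, hg⟩, C, hC, rfl⟩, hgC, hg⟩
  · rintro _ ⟨-, C, hC, rfl⟩
    refine isExtent_of_cl2_subset inter_subset_right ?_
    rw [cl2_eq_inter]
    exact inter_subset_inter_left _ ((cl2_mono inter_subset_left).trans (hext C hC).2.subset)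

lemma IsExtentPartition.refine (hπ : IsExtentPartition I univ π) (hZ : Z ∈ π) (hZH : Zᶜ ⊆ H)
    (hτ : IsExtentPartition I H τ) :
    IsExtentPartition I univ
      (insert Z {D | D.Nonempty ∧ ∃ F ∈ τ, ∃ C ∈ π, C ≠ Z ∧ D = F ∩ C}) := by
  obtain ⟨hπne, hπdisj, hπcov, hπext⟩ := hπ
  obtain ⟨-, hτdisj, hτcov, hτext⟩ := hτ
  have hCH : ∀ C ∈ π, C ≠ Z → C ⊆ H := fun C hC hCZ =>
    (subset_compl_iff_disjoint_right.mpr (hπdisj hC hZ hCZ)).trans hZH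
  refine ⟨?_, ?_, ?_, ?_⟩
  · rintro _ (rfl | ⟨hD, -⟩)
    exacts [hπne _ hZ, hD]
  · rintro _ (rfl | ⟨-, F₁, hF₁, C₁, hC₁, hC₁Z, rfl⟩) _ (rfl | ⟨-, F₂, hF₂, C₂, hC₂, hC₂Z, rfl⟩) hne
    · exact absurd rfl hne
    · exact (hπdisj hZ hC₂ (Ne.symm hC₂Z)).mono_right inter_subset_right
    · exact (hπdisj hC₁ hZ hC₁Z).mono_left inter_subset_right
    · by_cases hF : F₁ = F₂
      · subst hF
        exact (hπdisj hC₁ hC₂ fun h => hne (h ▸ rfl)).mono inter_subset_right inter_subset_right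
      · exact (hτdisj hF₁ hF₂ hF).mono inter_subset_left inter_subset_left
  · refine eq_univ_of_forall fun g => ?_
    by_cases hgZ : g ∈ Z
    · exact ⟨Z, mem_insert _ _, hgZ⟩
    obtain ⟨C, hC, hgC⟩ : g ∈ ⋃₀ π := hπcov ▸ mem_univ g
    have hCZ : C ≠ Z := fun h => hgZ (h ▸ hgC)
    obtain ⟨F, hF, hgF⟩ : g ∈ ⋃₀ τ := hτcov ▸ hCH C hC hCZ hgC
    exact ⟨F ∩ C, mem_insert_of_mem _ ⟨⟨g, hgF, hgC⟩, F, hF, C, hC, hCZ, rfl⟩, hgF, hgC⟩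
  · rintro _ (rfl | ⟨-, F, hF, C, hC, hCZ, rfl⟩)
    exacts [hπext _ hZ, (hτext F hF).inter_of_subset (hπext C hC) (hCH C hC hCZ)]

lemma IsBoxExtent.subset (hE : IsBoxExtent I H E) : E ⊆ H := by
  rcases hE with ⟨σ, hσ, hEσ⟩ | rfl
  · exact hσ.2.2.1 ▸ subset_sUnion_of_mem hEσ
  · exact cl2_subset

lemma IsBoxExtent.exists_partition (h0 : cl2 I H ∅ = ∅) (hE : IsBoxExtent I H E)
    (hne : E.Nonempty) : ∃ σ, IsExtentPartition I H σ ∧ E ∈ σ :=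
  hE.resolve_right fun h => by simp [h, h0] at hne

lemma IsBoxExtent.inter (hX : IsBoxExtent I univ X) (hne : (X ∩ H).Nonempty) :
    IsBoxExtent I H (X ∩ H) := by
  rcases hX with ⟨σ, hσ, hXσ⟩ | rfl
  · exact Or.inl ⟨_, hσ.restrict H, hne, X, hXσ, rfl⟩
  · exact Or.inr cl2_eq_inter.symm

lemma isBoxExtent_self (hH : H.Nonempty) : IsBoxExtent I H H :=
  Or.inl ⟨{H}, ⟨by simpa using hH, pairwise_singleton _ _, sUnion_singleton _,
    by simpa using isExtent_self⟩, rfl⟩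

lemma IsBoxClassTree.self_mem (hT : IsBoxClassTree I H T) (hH : H.Nonempty) : H ∈ T := by
  obtain ⟨⟨E, hET, hHE⟩, -⟩ := hT.2 H hH (isBoxExtent_self hH)
  exact (hT.1 E hET).2.subset.antisymm hHE ▸ hET

lemma IsBoxClassTree.total (hT : IsBoxClassTree I H T) {Y : Set G} (hY : Y.Nonempty)
    (hYbox : IsBoxExtent I H Y) (hA : A ∈ T) (hB : B ∈ T) (hYA : Y ⊆ A) (hYB : Y ⊆ B) :
    A ⊆ B ∨ B ⊆ A :=
  (hT.2 Y hY hYbox).2.total ⟨hA, hYA⟩ ⟨hB, hYB⟩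

lemma IsFinestExtentPartition.subset_of_inter_nonempty (hπ : IsFinestExtentPartition I H π)
    (h0 : cl2 I H ∅ = ∅) (hX : IsBoxExtent I H X) (hC : C ∈ π) (hXC : (X ∩ C).Nonempty) :
    C ⊆ X := by
  obtain ⟨g, hgX, hgC⟩ := hXC
  obtain ⟨σ, hσ, hXσ⟩ := hX.exists_partition h0 ⟨g, hgX⟩
  obtain ⟨S, hSπ, rfl⟩ := hπ.2 σ hσ X hXσ
  obtain ⟨D, hDS, hgD⟩ := hgX
  obtain rfl : C = D := by_contra fun hCD =>
    disjoint_left.mp (hπ.1.2.1 hC (hSπ hDS) hCD) hgC hgD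
  exact subset_sUnion_of_mem hDS

lemma IsFinestExtentPartition.mem_of_minimal (hπ : IsFinestExtentPartition I H π)
    (h0 : cl2 I H ∅ = ∅) (hA : IsBoxExtent I H A) (hAne : A.Nonempty)
    (hmin : ∀ F : Set G, F.Nonempty → IsBoxExtent I H F → F ⊆ A → F = A) : A ∈ π := by
  obtain ⟨g, hg⟩ := hAne
  obtain ⟨C, hC, hgC⟩ : g ∈ ⋃₀ π := hπ.1.2.2.1 ▸ hA.subset hg
  have hCA := hmin C ⟨g, hgC⟩ (Or.inl ⟨π, hπ.1, hC⟩)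
    (hπ.subset_of_inter_nonempty h0 hA hC ⟨g, hg, hgC⟩)
  exact hCA ▸ hC

end

section

variable {I : G → M → Prop} {H A B C F X Z : Set G} {π : Set (Set G)}

lemma inter_nonempty_of_isBoxExtent (hπ : IsFinestExtentPartition I univ π)
    (h0 : cl2 I univ ∅ = ∅) (hZ : Z ∈ π) (hHZ : Hᶜ ⊆ Z) (hZH : (Z ∩ H).Nonempty)
    (hX : IsBoxExtent I univ X) (hXne : X.Nonempty) : (X ∩ H).Nonempty := by
  obtain ⟨x, hx⟩ := hXne
  by_cases hxH : x ∈ H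
  · exact ⟨x, hx, hxH⟩
  · exact hZH.mono (inter_subset_inter_left _
      (hπ.subset_of_inter_nonempty h0 hX hZ ⟨x, hx, hHZ hxH⟩))

lemma subset_of_inter_subset_inter (hπ : IsFinestExtentPartition I univ π)
    (h0 : cl2 I univ ∅ = ∅) (hZ : Z ∈ π) (hHZ : Hᶜ ⊆ Z) (hZH : (Z ∩ H).Nonempty)
    (hA : IsBoxExtent I univ A) (hB : IsBoxExtent I univ B) (hAB : A ∩ H ⊆ B ∩ H) :
    A ⊆ B := by
  intro g hg
  by_cases hgH : g ∈ H
  · exact (hAB ⟨hg, hgH⟩).1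
  have hZA := hπ.subset_of_inter_nonempty h0 hA hZ ⟨g, hg, hHZ hgH⟩
  obtain ⟨w, hwZ, hwH⟩ := hZH
  have hZB := hπ.subset_of_inter_nonempty h0 hB hZ ⟨w, (hAB ⟨hZA hwZ, hwH⟩).1, hwZ⟩
  exact hZB (hHZ hgH)

lemma isBoxExtent_univ_of_subset_class (h0 : cl2 I univ ∅ = ∅)
    (hπ : IsExtentPartition I univ π) (hZ : Z ∈ π) (hZH : Zᶜ ⊆ H) (hC : C ∈ π) (hCZ : C ≠ Z)
    (hF : IsBoxExtent I H F) (hFne : F.Nonempty) (hFC : F ⊆ C) : IsBoxExtent I univ F := by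
  obtain ⟨τ, hτ, hFτ⟩ := hF.exists_partition (by rw [cl2_eq_inter, h0, empty_inter]) hFne
  exact Or.inl ⟨_, hπ.refine hZ hZH hτ,
    mem_insert_of_mem _ ⟨hFne, F, hFτ, C, hC, hCZ, (inter_eq_left.mpr hFC).symm⟩⟩

end

section

variable {I : G → M → Prop} {z : G} {A B E X Z : Set G} {π T : Set (Set G)}

lemma IsBoxClassTree.inter_mem_of_mem_treeStar (hT : IsBoxClassTree I (univ \ {z}) T)
    (hE : E ∈ treeStar I z T) : E ∩ (univ \ {z}) ∈ T := by
  rcases hE with ⟨hET, -⟩ | ⟨E, ⟨hET, -⟩, rfl⟩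
  · rwa [inter_eq_left.mpr (hT.1 E hET).2.subset]
  · rwa [union_inter_distrib_right, inter_eq_left.mpr (hT.1 E hET).2.subset,
      singleton_inter_eq_empty.mpr (by simp), union_empty]

lemma IsBoxClassTree.univ_mem_treeStar (hT : IsBoxClassTree I (univ \ {z}) T)
    (hH : (univ \ {z}).Nonempty) : univ ∈ treeStar I z T :=
  Or.inr ⟨univ \ {z}, ⟨hT.self_mem hH, by simpa using isBoxExtent_self ⟨z, mem_univ z⟩⟩, by simp⟩

lemma isBoxExtent_of_mem_treeStar_union (hπ : IsExtentPartition I univ π) (hZ : Z ∈ π)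
    (hT : IsBoxClassTree I (univ \ {z}) T) (hE : E ∈ treeStar I z T ∪ {Z}) :
    E.Nonempty ∧ IsBoxExtent I univ E := by
  rcases hE with (⟨hET, hbox⟩ | ⟨E, ⟨-, hbox⟩, rfl⟩) | rfl
  exacts [⟨(hT.1 E hET).1, hbox⟩, ⟨⟨z, mem_union_right _ rfl⟩, hbox⟩,
    ⟨hπ.1 _ hZ, Or.inl ⟨π, hπ, hZ⟩⟩]

lemma treeStar_union_total (hempty : cl2 I univ ∅ = ∅) (hπ : IsFinestExtentPartition I univ π)
    (hZ : Z ∈ π) (hzZ : z ∈ Z) (hZz : (Z ∩ (univ \ {z})).Nonempty)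
    (hT : IsBoxClassTree I (univ \ {z}) T) (hX : IsBoxExtent I univ X) (hXne : X.Nonempty)
    (hA : A ∈ treeStar I z T ∪ {Z}) (hB : B ∈ treeStar I z T ∪ {Z}) (hXA : X ⊆ A)
    (hXB : X ⊆ B) : A ⊆ B ∨ B ⊆ A := by
  have hHZ : (univ \ {z})ᶜ ⊆ Z := fun g hg =>
    by_contra fun hgZ => hg ⟨trivial, fun hgz => hgZ (hgz ▸ hzZ)⟩
  obtain ⟨-, hAbox⟩ := isBoxExtent_of_mem_treeStar_union hπ.1 hZ hT hA
  obtain ⟨-, hBbox⟩ := isBoxExtent_of_mem_treeStar_union hπ.1 hZ hT hB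
  obtain ⟨x, hx⟩ := hXne
  rcases hA with hA | rfl
  swap
  · exact Or.inl (hπ.subset_of_inter_nonempty hempty hBbox hZ ⟨x, hXB hx, hXA hx⟩)
  rcases hB with hB | rfl
  swap
  · exact Or.inr (hπ.subset_of_inter_nonempty hempty hAbox hZ ⟨x, hXA hx, hXB hx⟩)
  have hY := inter_nonempty_of_isBoxExtent hπ hempty hZ hHZ hZz hX ⟨x, hx⟩
  rcases hT.total hY (hX.inter hY) (hT.inter_mem_of_mem_treeStar hA)
      (hT.inter_mem_of_mem_treeStar hB) (inter_subset_inter_left _ hXA)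
      (inter_subset_inter_left _ hXB) with h | h
  exacts [Or.inl (subset_of_inter_subset_inter hπ hempty hZ hHZ hZz hAbox hBbox h),
    Or.inr (subset_of_inter_subset_inter hπ hempty hZ hHZ hZz hBbox hAbox h)]

lemma mem_treeStar_union_of_minimal (hempty : cl2 I univ ∅ = ∅)
    (hπ : IsFinestExtentPartition I univ π) (hZ : Z ∈ π) (hzZ : z ∈ Z)
    (hatoms : ∀ A : Set G, A.Nonempty → IsBoxExtent I (univ \ {z}) A →
      (∀ F : Set G, F.Nonempty → IsBoxExtent I (univ \ {z}) F → F ⊆ A → F = A) → A ∈ T)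
    (hA : IsBoxExtent I univ A) (hAne : A.Nonempty)
    (hmin : ∀ F : Set G, F.Nonempty → IsBoxExtent I univ F → F ⊆ A → F = A) :
    A ∈ treeStar I z T ∪ {Z} := by
  have hAπ := hπ.mem_of_minimal hempty hA hAne hmin
  by_cases hAZ : A = Z
  · exact Or.inr hAZ
  have hZH : Zᶜ ⊆ univ \ {z} := fun g hg => ⟨trivial, fun hgz => hg (hgz ▸ hzZ)⟩
  have hAH : A ∩ (univ \ {z}) = A :=
    inter_eq_left.mpr ((subset_compl_iff_disjoint_right.mpr (hπ.1.2.1 hAπ hZ hAZ)).trans hZH)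
  have hAboxH : IsBoxExtent I (univ \ {z}) A := hAH ▸ hA.inter (hAH.symm ▸ hAne)
  refine Or.inl (Or.inl ⟨hatoms A hAne hAboxH fun F hFne hF hFA => ?_, hA⟩)
  exact hmin F hFne (isBoxExtent_univ_of_subset_class hempty hπ.1 hZ hZH hAπ hAZ hF hFne hFA) hFA

end

theorem treeStar_with_atom_isBoxClassTree_with_atoms_general
    (I : G → M → Prop)
    (hempty : cl2 I Set.univ (∅ : Set G) = ∅)
    (z : G) (π : Set (Set G)) (hπ : IsFinestExtentPartition I Set.univ π)
    (Z : Set G) (hZ : Z ∈ π) (hzZ : z ∈ Z) (hZne : Z ≠ {z})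
    (T : Set (Set G)) (hT : IsBoxClassTree I (Set.univ \ {z}) T)
    (hatoms : ∀ A : Set G, A.Nonempty → IsBoxExtent I (Set.univ \ {z}) A →
      (∀ F : Set G, F.Nonempty → IsBoxExtent I (Set.univ \ {z}) F → F ⊆ A → F = A) →
      A ∈ T) :
    IsBoxClassTree I Set.univ (treeStar I z T ∪ {Z}) ∧
    ∀ A : Set G, A.Nonempty → IsBoxExtent I Set.univ A →
      (∀ F : Set G, F.Nonempty → IsBoxExtent I Set.univ F → F ⊆ A → F = A) →
      A ∈ treeStar I z T ∪ {Z} := by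
  have hZz : (Z ∩ (univ \ {z})).Nonempty := by
    by_contra h
    refine hZne (subset_antisymm (fun g hg => ?_) (singleton_subset_iff.mpr hzZ))
    by_contra hgz
    exact h ⟨g, hg, trivial, hgz⟩
  refine ⟨⟨fun E hE => isBoxExtent_of_mem_treeStar_union hπ.1 hZ hT hE, fun X hXne hX => ?_⟩,
    fun A hAne hA hmin => mem_treeStar_union_of_minimal hempty hπ hZ hzZ hatoms hA hAne hmin⟩
  refine ⟨⟨univ, Or.inl (hT.univ_mem_treeStar (hZz.mono inter_subset_right)), subset_univ X⟩, ?_⟩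
  rintro A ⟨hA, hXA⟩ B ⟨hB, hXB⟩ -
  exact treeStar_union_total hempty hπ hZ hzZ hZz hT hX hXne hA hB hXA hXB

/-- If moreover `T` contains every minimal nonempty box extent (atom) of the subcontext,
then `T* ∪ {z^□□}` is a classification tree in `B(G,M,I)` containing every minimal
nonempty box extent of `(G,M,I)`. -/
theorem treeStar_with_atom_isBoxClassTree_with_atoms
    [Fintype G] [Fintype M] (I : G → M → Prop)
    (hempty : cl2 I Set.univ (∅ : Set G) = ∅)
    (z : G) (π : Set (Set G)) (hπ : IsFinestExtentPartition I Set.univ π)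
    (Z : Set G) (hZ : Z ∈ π) (hzZ : z ∈ Z) (hZne : Z ≠ {z})
    (T : Set (Set G)) (hT : IsBoxClassTree I (Set.univ \ {z}) T)
    (hatoms : ∀ A : Set G, A.Nonempty → IsBoxExtent I (Set.univ \ {z}) A →
      (∀ F : Set G, F.Nonempty → IsBoxExtent I (Set.univ \ {z}) F → F ⊆ A → F = A) →
      A ∈ T) :
    IsBoxClassTree I Set.univ (treeStar I z T ∪ {Z}) ∧
    ∀ A : Set G, A.Nonempty → IsBoxExtent I Set.univ A →
      (∀ F : Set G, F.Nonempty → IsBoxExtent I Set.univ F → F ⊆ A → F = A) →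
      A ∈ treeStar I z T ∪ {Z} :=
  treeStar_with_atom_isBoxClassTree_with_atoms_general I hempty z π hπ Z hZ hzZ hZne T hT hatoms
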